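/- Let μ : ℝ → ℝ be continuous and nonnegative and let Φ : ℝ → ℝ be locally integrable. Define n(a,t) = Φ(a−t)·exp(−∫₀^t μ(s + a − t) ds) for a ≥ 0, t ≥ 0. Then for every smooth function ψ : ℝ² → ℝ whose compact support is contained in the open quadrant Q = {(a,t) : a > 0, t > 0}, one has ∬_Q (∂ψ/∂t(a,t) + ∂ψ/∂a(a,t) − μ(a)·ψ(a,t)) · n(a,t) da dt = 0; that is, n is a weak solution of the McKendrick equation in the sense of distributions. -/

import Mathlib

open MeasureTheory Real Set

/-- `n(a,t) = Φ(a−t)·exp(−∫₀^t μ(s+a−t) ds)`, with `Φ` locally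
integrable, is a weak solution (in the sense of distributions) of the
McKendrick equation on the open quadrant `Q = {(a,t) : a > 0, t > 0}`:
for every smooth `ψ` compactly supported in `Q`,
`∬_Q (∂ψ/∂t + ∂ψ/∂a − μ(a)ψ)·n da dt = 0`. -/
theorem mckendrick_weak_solution_initial_part
    (μ : ℝ → ℝ) (hμc : Continuous μ) (hμ0 : ∀ x, 0 ≤ μ x)
    (Φ : ℝ → ℝ) (hΦ : MeasureTheory.LocallyIntegrable Φ volume)
    (n : ℝ × ℝ → ℝ)
    (hn : ∀ p : ℝ × ℝ, 0 ≤ p.1 → 0 ≤ p.2 →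
      n p = Φ (p.1 - p.2) * Real.exp (-(∫ s in (0:ℝ)..p.2, μ (s + p.1 - p.2)))) :
    ∀ ψ : ℝ × ℝ → ℝ, ContDiff ℝ (⊤ : ℕ∞) ψ → HasCompactSupport ψ →
      tsupport ψ ⊆ {p : ℝ × ℝ | 0 < p.1 ∧ 0 < p.2} →
      ∫ p in {p : ℝ × ℝ | 0 < p.1 ∧ 0 < p.2},
        (fderiv ℝ ψ p ((0:ℝ), (1:ℝ)) + fderiv ℝ ψ p ((1:ℝ), (0:ℝ))
          - μ p.1 * ψ p) * n p = 0 := by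
  intro ψ hψ hψc hψs
  -- The primitive of μ
  set M : ℝ → ℝ := fun x => ∫ s in (0:ℝ)..x, μ s with hMdef
  have hμint : ∀ a b : ℝ, IntervalIntegrable μ volume a b :=
    fun a b => hμc.intervalIntegrable a b
  have hMderiv : ∀ x : ℝ, HasDerivAt M (μ x) x := fun x =>
    (hμc.integral_hasStrictDerivAt 0 x).hasDerivAt
  have hMcont : Continuous M :=
    Differentiable.continuous (fun x => (hMderiv x).differentiableAt)
  have hMsub : ∀ c t : ℝ, (∫ s in (0:ℝ)..t, μ (s + c)) = M (c + t) - M c := by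
    intro c t
    have h1 : (∫ s in (0:ℝ)..t, μ (s + c)) = ∫ x in (0 + c)..(t + c), μ x :=
      intervalIntegral.integral_comp_add_right μ c
    have h2 := intervalIntegral.integral_interval_sub_left (hμint 0 (t + c)) (hμint 0 c)
    rw [h1, zero_add]
    rw [← h2]
    simp [hMdef, add_comm]
  -- the smooth factor of the integrand
  set D : ℝ × ℝ → ℝ := fun p =>
    fderiv ℝ ψ p ((0:ℝ), (1:ℝ)) + fderiv ℝ ψ p ((1:ℝ), (0:ℝ)) - μ p.1 * ψ p with hDdef
  have hD0 : ∀ p, p ∉ tsupport ψ → D p = 0 := by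
    intro p hp
    have h1 : fderiv ℝ ψ p = 0 := by
      by_contra h
      exact hp (support_fderiv_subset ℝ (by simpa [Function.mem_support] using h))
    have h2 : ψ p = 0 := image_eq_zero_of_notMem_tsupport hp
    simp [hDdef, h1, h2]
  have hDcont : Continuous D := by
    have hfd : Continuous (fderiv ℝ ψ) := hψ.continuous_fderiv (by simp)
    exact ((hfd.clm_apply continuous_const).add (hfd.clm_apply continuous_const)).sub
      ((hμc.comp continuous_fst).mul hψ.continuous)
  -- bound on D
  have hDcs : HasCompactSupport D :=
    HasCompactSupport.mono' hψc (fun p hp => by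
      by_contra h; exact hp (hD0 p h))
  obtain ⟨C, hC⟩ := hDcs.exists_bound_of_continuous hDcont
  have hC0 : 0 ≤ C := le_trans (norm_nonneg _) (hC (0, 0))
  -- radius bound for the support of ψ
  obtain ⟨R₀, hR₀⟩ := hψc.isBounded.subset_closedBall 0
  set R : ℝ := max R₀ 0 with hRdef
  have hR0 : 0 ≤ R := le_max_right _ _
  have hRψ : ∀ p : ℝ × ℝ, p ∈ tsupport ψ → |p.1| ≤ R ∧ |p.2| ≤ R := by
    intro p hp
    have := hR₀ hp
    rw [Metric.mem_closedBall, dist_zero_right] at this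
    have h1 : ‖p.1‖ ≤ ‖p‖ := norm_fst_le p
    have h2 : ‖p.2‖ ≤ ‖p‖ := norm_snd_le p
    constructor
    · exact le_trans h1 (le_trans this (le_max_left _ _))
    · exact le_trans h2 (le_trans this (le_max_left _ _))
  -- the function after the change of variables (c, t) ↦ (c + t, t)
  set H : ℝ × ℝ → ℝ := fun q =>
    (D (q.1 + q.2, q.2) * Real.exp (M q.1 - M (q.1 + q.2))) * Φ q.1 with hHdef
  -- the function in straight coordinates
  set G : ℝ × ℝ → ℝ := fun p =>
    D p * (Φ (p.1 - p.2) * Real.exp (M (p.1 - p.2) - M p.1)) with hGdef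
  -- the shear map
  set e : ℝ × ℝ → ℝ × ℝ := fun q => (q.1 + q.2, q.2) with hedef
  have heGH : ∀ q, G (e q) = H q := by
    intro q
    simp only [hGdef, hedef, hHdef, add_sub_cancel_right]
    ring
  -- the shear is measure preserving
  have hk : MeasurePreserving (fun q : ℝ × ℝ => (q.1, q.2 + q.1))
      (volume.prod volume) (volume.prod volume) := by
    refine MeasurePreserving.skew_product (g := fun a c => c + a)
      (MeasurePreserving.id volume) ?_ (ae_of_all _ fun a => ?_)
    · exact measurable_snd.add measurable_fst
    · exact (measurePreserving_add_right volume a).map_eq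
  have hepres : MeasurePreserving e (volume : Measure (ℝ × ℝ)) volume := by
    have hswap : MeasurePreserving (Prod.swap : ℝ × ℝ → ℝ × ℝ)
        (volume.prod volume) (volume.prod volume) := Measure.measurePreserving_swap
    have : MeasurePreserving (Prod.swap ∘ (fun q : ℝ × ℝ => (q.1, q.2 + q.1)) ∘ Prod.swap)
        (volume.prod volume) (volume.prod volume) := (hswap.comp hk).comp hswap
    have he : e = Prod.swap ∘ (fun q : ℝ × ℝ => (q.1, q.2 + q.1)) ∘ Prod.swap := by
      funext q; simp [hedef, Prod.swap]
    rw [Measure.volume_eq_prod, he]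
    exact this
  have heemb : MeasurableEmbedding e := by
    have : Measurable e := (measurable_fst.add measurable_snd).prodMk measurable_snd
    have hinv : Measurable (fun p : ℝ × ℝ => (p.1 - p.2, p.2)) :=
      (measurable_fst.sub measurable_snd).prodMk measurable_snd
    exact MeasurableEquiv.measurableEmbedding
      { toFun := e
        invFun := fun p => (p.1 - p.2, p.2)
        left_inv := fun q => by simp [hedef]
        right_inv := fun p => by simp [hedef]
        measurable_toFun := this
        measurable_invFun := hinv }
  -- integrability of H
  have hΦInt : IntegrableOn Φ (Icc (-(2 * R)) (2 * R)) volume :=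
    hΦ.integrableOn_isCompact isCompact_Icc
  have hHmeas : AEStronglyMeasurable H (volume.prod volume) := by
    have h1 : Continuous fun q : ℝ × ℝ => D (q.1 + q.2, q.2) *
        Real.exp (M q.1 - M (q.1 + q.2)) := by
      have hc1 : Continuous fun q : ℝ × ℝ => q.1 + q.2 := continuous_fst.add continuous_snd
      exact (hDcont.comp (hc1.prodMk continuous_snd)).mul
        ((continuous_exp.comp ((hMcont.comp continuous_fst).sub (hMcont.comp hc1))))
    have h2 : AEMeasurable (fun q : ℝ × ℝ => Φ q.1) (volume.prod volume) :=
      (hΦ.aestronglyMeasurable.aemeasurable).comp_fst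
    exact h1.aestronglyMeasurable.mul h2.aestronglyMeasurable
  have hHbound : ∀ q : ℝ × ℝ, ‖H q‖ ≤
      (Icc (-(2 * R)) (2 * R)).indicator (fun c => C * |Φ c|) q.1 *
        (Icc (-R) R).indicator (fun _ => (1:ℝ)) q.2 := by
    intro q
    by_cases hq : D (q.1 + q.2, q.2) = 0
    · simp only [hHdef, hq, zero_mul, norm_zero]
      apply mul_nonneg
      · exact Set.indicator_nonneg (fun c _ => mul_nonneg hC0 (abs_nonneg _)) _
      · exact Set.indicator_nonneg (fun _ _ => zero_le_one) _
    · have hmem : ((q.1 + q.2, q.2) : ℝ × ℝ) ∈ tsupport ψ := by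
        by_contra h
        exact hq (hD0 _ h)
      have hb := hRψ _ hmem
      have hQ := hψs hmem
      have ht : 0 < q.2 := hQ.2
      have hb1 : |q.1 + q.2| ≤ R := hb.1
      have hb2 : |q.2| ≤ R := hb.2
      have hc : q.1 ∈ Icc (-(2 * R)) (2 * R) := by
        constructor
        · nlinarith [abs_le.1 hb1, abs_le.1 hb2]
        · nlinarith [abs_le.1 hb1, abs_le.1 hb2]
      have htI : q.2 ∈ Icc (-R) R := abs_le.1 hb2
      rw [Set.indicator_of_mem hc, Set.indicator_of_mem htI, mul_one]
      -- exp factor ≤ 1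
      have hMle : M q.1 ≤ M (q.1 + q.2) := by
        have h2 := intervalIntegral.integral_interval_sub_left
          (hμint 0 (q.1 + q.2)) (hμint 0 q.1)
        have hpos : 0 ≤ ∫ s in q.1..(q.1 + q.2), μ s :=
          intervalIntegral.integral_nonneg (by linarith) (fun u _ => hμ0 u)
        have : M (q.1 + q.2) - M q.1 = ∫ s in q.1..(q.1 + q.2), μ s := h2
        linarith
      have hexp1 : Real.exp (M q.1 - M (q.1 + q.2)) ≤ 1 :=
        Real.exp_le_one_iff.2 (by linarith)
      have hexp0 : 0 < Real.exp (M q.1 - M (q.1 + q.2)) := Real.exp_pos _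
      have : ‖H q‖ = |D (q.1 + q.2, q.2)| * Real.exp (M q.1 - M (q.1 + q.2)) * |Φ q.1| := by
        simp only [hHdef, Real.norm_eq_abs, abs_mul, abs_of_pos hexp0]
      rw [this]
      have hDb : |D (q.1 + q.2, q.2)| ≤ C := by
        simpa [Real.norm_eq_abs] using hC (q.1 + q.2, q.2)
      calc |D (q.1 + q.2, q.2)| * Real.exp (M q.1 - M (q.1 + q.2)) * |Φ q.1|
          ≤ C * 1 * |Φ q.1| := by
            apply mul_le_mul_of_nonneg_right _ (abs_nonneg _)
            exact mul_le_mul hDb hexp1 (le_of_lt hexp0) hC0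
        _ = C * |Φ q.1| := by ring
  have hHint : Integrable H (volume.prod volume) := by
    have hf : Integrable ((Icc (-(2 * R)) (2 * R)).indicator (fun c => C * |Φ c|)) volume := by
      refine (IntegrableOn.integrable_indicator ?_ measurableSet_Icc)
      exact (hΦInt.abs.const_mul C)
    have hg : Integrable ((Icc (-R) R).indicator (fun _ => (1:ℝ))) volume := by
      refine (IntegrableOn.integrable_indicator ?_ measurableSet_Icc)
      exact integrableOn_const measure_Icc_lt_top.ne
    have hfg := hf.mul_prod hg
    exact Integrable.mono' hfg hHmeas (ae_of_all _ fun q => hHbound q)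
  -- inner integral vanishes by FTC
  have hinner : ∀ c : ℝ, (∫ t : ℝ, H (c, t)) = 0 := by
    intro c
    set h : ℝ → ℝ := fun t => D (c + t, t) * Real.exp (M c - M (c + t)) with hhdef
    have hH : (fun t : ℝ => H (c, t)) = fun t => h t * Φ c := by
      funext t; simp [hHdef, hhdef]
    rw [hH, MeasureTheory.integral_mul_const]
    have hzero : (∫ t : ℝ, h t) = 0 := by
      -- F is the antiderivative
      set F : ℝ → ℝ := fun t => ψ (c + t, t) * Real.exp (M c - M (c + t)) with hFdef
      have hFderiv : ∀ t : ℝ, HasDerivAt F (h t) t := by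
        intro t
        have hγ : HasDerivAt (fun t : ℝ => ((c + t, t) : ℝ × ℝ)) ((1, 1) : ℝ × ℝ) t :=
          ((hasDerivAt_id t).const_add c).prodMk (hasDerivAt_id t)
        have hψd : HasFDerivAt ψ (fderiv ℝ ψ (c + t, t)) (c + t, t) :=
          (hψ.differentiable (by simp) (c + t, t)).hasFDerivAt
        have h1 := HasFDerivAt.comp_hasDerivAt (f := fun t : ℝ => ((c + t, t) : ℝ × ℝ)) t hψd hγ
        have hMc : HasDerivAt (fun t : ℝ => M (c + t)) (μ (c + t)) t := by
          have := (hMderiv (c + t)).comp t ((hasDerivAt_id t).const_add c)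
          simpa [Function.comp_def] using this
        have h2 : HasDerivAt (fun t : ℝ => M c - M (c + t)) (-μ (c + t)) t :=
          hMc.const_sub (M c)
        have h3 : HasDerivAt (fun t : ℝ => Real.exp (M c - M (c + t)))
            (Real.exp (M c - M (c + t)) * (-μ (c + t))) t := h2.exp
        have h4 := h1.mul h3
        simp only [Function.comp_apply, Function.comp_def] at h4
        have hsplit : fderiv ℝ ψ (c + t, t) ((1 : ℝ), (1 : ℝ)) =
            fderiv ℝ ψ (c + t, t) ((0 : ℝ), (1 : ℝ)) +
            fderiv ℝ ψ (c + t, t) ((1 : ℝ), (0 : ℝ)) := by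
          rw [← ContinuousLinearMap.map_add]
          norm_num
        have heq : fderiv ℝ ψ (c + t, t) ((1 : ℝ), (1 : ℝ)) *
            Real.exp (M c - M (c + t)) +
            ψ (c + t, t) * (Real.exp (M c - M (c + t)) * (-μ (c + t))) = h t := by
          simp only [hhdef, hDdef]
          rw [hsplit]
          ring
        rw [heq] at h4
        exact h4
      have hhcont : Continuous h := by
        have hc1 : Continuous fun t : ℝ => ((c + t, t) : ℝ × ℝ) :=
          (continuous_const.add continuous_id).prodMk continuous_id
        exact (hDcont.comp hc1).mul
          (continuous_exp.comp (continuous_const.sub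
            (hMcont.comp (continuous_const.add continuous_id))))
      set b : ℝ := R + 1 with hbdef
      have hb0 : 0 < b := by positivity
      have hout : ∀ t : ℝ, t ∉ Ioc (-b) b → h t = 0 := by
        intro t ht
        apply mul_eq_zero_of_left
        apply hD0
        intro hmem
        have := (hRψ _ hmem).2
        simp only [Set.mem_Ioc, not_and_or, not_lt, not_le] at ht
        rcases ht with ht | ht
        · have := abs_le.1 this
          simp only at this
          linarith [this.1]
        · have := abs_le.1 this
          simp only at this
          linarith [this.2]
      have hFout : ∀ t : ℝ, |t| > R → F t = 0 := by
        intro t ht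
        apply mul_eq_zero_of_left
        apply image_eq_zero_of_notMem_tsupport
        intro hmem
        exact absurd (hRψ _ hmem).2 (not_le.2 ht)
      have e1 : (∫ t : ℝ, h t) = ∫ t in Ioc (-b) b, h t :=
        (setIntegral_eq_integral_of_forall_compl_eq_zero (fun t ht => hout t ht)).symm
      have e2 : (∫ t in Ioc (-b) b, h t) = ∫ t in (-b)..b, h t :=
        (intervalIntegral.integral_of_le (by linarith)).symm
      have e3 : (∫ t in (-b)..b, h t) = F b - F (-b) :=
        intervalIntegral.integral_eq_sub_of_hasDerivAt
          (fun t _ => hFderiv t) (hhcont.intervalIntegrable _ _)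
      have hFb : F b = 0 := hFout b (by rw [abs_of_pos hb0]; simp [hbdef])
      have hFnb : F (-b) = 0 := hFout (-b) (by rw [abs_neg, abs_of_pos hb0]; simp [hbdef])
      rw [e1, e2, e3, hFb, hFnb, sub_zero]
    rw [hzero, zero_mul]
  -- put everything together
  have hQmeas : MeasurableSet {p : ℝ × ℝ | 0 < p.1 ∧ 0 < p.2} := by
    have : IsOpen {p : ℝ × ℝ | 0 < p.1 ∧ 0 < p.2} :=
      (isOpen_lt continuous_const continuous_fst).inter
        (isOpen_lt continuous_const continuous_snd)
    exact this.measurableSet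
  calc ∫ p in {p : ℝ × ℝ | 0 < p.1 ∧ 0 < p.2},
        (fderiv ℝ ψ p ((0:ℝ), (1:ℝ)) + fderiv ℝ ψ p ((1:ℝ), (0:ℝ))
          - μ p.1 * ψ p) * n p
      = ∫ p in {p : ℝ × ℝ | 0 < p.1 ∧ 0 < p.2}, G p := by
        apply setIntegral_congr_fun hQmeas
        intro p hp
        have hp1 : (0:ℝ) ≤ p.1 := le_of_lt hp.1
        have hp2 : (0:ℝ) ≤ p.2 := le_of_lt hp.2
        have hnp := hn p hp1 hp2
        have hint : (∫ s in (0:ℝ)..p.2, μ (s + p.1 - p.2)) =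
            M p.1 - M (p.1 - p.2) := by
          have : (∫ s in (0:ℝ)..p.2, μ (s + p.1 - p.2)) =
              ∫ s in (0:ℝ)..p.2, μ (s + (p.1 - p.2)) := by
            congr 1
            funext s
            ring_nf
          rw [this, hMsub (p.1 - p.2) p.2, sub_add_cancel]
        simp only [hGdef]
        rw [hnp, hint, neg_sub]
      _ = ∫ p : ℝ × ℝ, G p := by
        apply setIntegral_eq_integral_of_forall_compl_eq_zero
        intro p hp
        have : p ∉ tsupport ψ := fun h => hp (hψs h)
        simp [hGdef, hD0 p this]
      _ = ∫ q : ℝ × ℝ, G (e q) := (hepres.integral_comp heemb G).symm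
      _ = ∫ q : ℝ × ℝ, H q := by
        apply integral_congr_ae
        exact ae_of_all _ heGH
      _ = ∫ c : ℝ, ∫ t : ℝ, H (c, t) := by
        rw [Measure.volume_eq_prod]
        exact MeasureTheory.integral_prod H hHint
      _ = 0 := by
        simp only [hinner]
        exact integral_zero _ _
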